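/- If n - k ≥ m, the matrix k-plane Radon transform f ↦ f̂ is injective on the Schwartz space S(M_{n,m}): if f̂(ξ,t) = 0 for all ξ ∈ V_{n,n-k} and all t ∈ M_{n-k,m}, then f ≡ 0. -/

import Mathlib

/-! If `y = g [0; s]` with `g ∈ SO(n)` and `s ∈ M_{n-k,m}`, the change of variables `x = g [u; t]`
in the Fourier integral of `f` at `y` gives `𝓕f(y) = ∫ e^{-2πi tr(tᵀ s)} f̂(g ξ₀, t) dt` (the
Fourier slice theorem). Every `y` has this form when `m ≤ n - k`: the columns of `y` span at most
`m` dimensions, so there is a positively oriented orthonormal basis whose first `k` vectors are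
orthogonal to them. Hence `f̂ = 0` forces `𝓕f = 0`, and Fourier inversion gives `f = 0`. -/

open MeasureTheory Matrix

attribute [local instance] Matrix.normedAddCommGroup Matrix.normedSpace

noncomputable instance matMeasureSpace {α β : Type*} [Fintype α] [Fintype β] :
    MeasureSpace (Matrix α β ℝ) :=
  inferInstanceAs (MeasureSpace (α → β → ℝ))

/-- The distinguished frame `ξ₀ = [0; I_{n-k}] ∈ V_{n,n-k}`, with `n = k + l`
realized through the index type `Fin k ⊕ Fin l`. -/
def xi0 (k l : ℕ) : Matrix (Fin k ⊕ Fin l) (Fin l) ℝ := Matrix.fromRows 0 1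

open scoped FourierTransform RealInnerProductSpace Kronecker

section OrthonormalBasis

variable {ι κ E : Type*} [Fintype ι] [Fintype κ]
  [NormedAddCommGroup E] [InnerProductSpace ℝ E] [FiniteDimensional ℝ E]

theorem exists_orthonormalBasis_apply_inl_mem (W : Submodule ℝ E)
    (hW : Fintype.card ι ≤ Module.finrank ℝ W) (hE : Module.finrank ℝ E = Fintype.card (ι ⊕ κ)) :
    ∃ b : OrthonormalBasis (ι ⊕ κ) ℝ E, ∀ i, b (Sum.inl i) ∈ W := by
  let w : ι → E := fun i =>
    stdOrthonormalBasis ℝ W ((Fintype.equivFin ι).toEmbedding.trans (Fin.castLEEmb hW) i)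
  have hw : Orthonormal ℝ w :=
    ((stdOrthonormalBasis ℝ W).orthonormal.comp _
      (Function.Embedding.injective _)).comp_linearIsometry W.subtypeₗᵢ
  let e := Equiv.ofInjective (Sum.inl : ι → ι ⊕ κ) Sum.inl_injective
  have hv : Orthonormal ℝ ((Set.range (Sum.inl : ι → ι ⊕ κ)).domRestrict (Sum.elim w 0)) := by
    have : (Set.range (Sum.inl : ι → ι ⊕ κ)).domRestrict (Sum.elim w 0) = w ∘ e.symm := by
      ext1 ⟨_, i, rfl⟩
      exact congrArg w (e.symm_apply_apply i).symm
    rw [this]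
    exact hw.comp e.symm e.symm.injective
  obtain ⟨b, hb⟩ := hv.exists_orthonormalBasis_extension_of_card_eq hE
  exact ⟨b, fun i => hb (Sum.inl i) ⟨i, rfl⟩ ▸ (stdOrthonormalBasis ℝ W _).2⟩

theorem exists_orthonormalBasis_orientation_eq_apply_inl_mem [DecidableEq ι] [DecidableEq κ]
    [Nonempty (ι ⊕ κ)] (o : Orientation ℝ E (ι ⊕ κ)) (W : Submodule ℝ E)
    (hW : Fintype.card ι ≤ Module.finrank ℝ W) (hE : Module.finrank ℝ E = Fintype.card (ι ⊕ κ)) :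
    ∃ b : OrthonormalBasis (ι ⊕ κ) ℝ E, b.toBasis.orientation = o ∧ ∀ i, b (Sum.inl i) ∈ W := by
  obtain ⟨b, hb⟩ := exists_orthonormalBasis_apply_inl_mem W hW hE
  refine ⟨b.adjustToOrientation o, b.orientation_adjustToOrientation o, fun i => ?_⟩
  rcases b.adjustToOrientation_apply_eq_or_eq_neg o (Sum.inl i) with h | h <;> rw [h]
  exacts [hb i, W.neg_mem (hb i)]

end OrthonormalBasis

namespace Matrix

section Rotation

variable {ι κ β : Type*} [Fintype ι] [Fintype κ] [Fintype β] [DecidableEq ι] [DecidableEq κ]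

/- The ascription on `fromRows` matters: without it, `g * fromRows 0 s` elaborates to
`CStarMatrix` multiplication, as it does in the statement of `radon_injective`. -/
theorem exists_mul_fromRows_zero (hβ : Fintype.card β ≤ Fintype.card κ)
    (y : Matrix (ι ⊕ κ) β ℝ) :
    ∃ (g : Matrix (ι ⊕ κ) (ι ⊕ κ) ℝ) (s : Matrix κ β ℝ),
      gᵀ * g = 1 ∧ g.det = 1 ∧ y = g * (fromRows 0 s : Matrix (ι ⊕ κ) β ℝ) := by
  cases isEmpty_or_nonempty (ι ⊕ κ)
  · exact ⟨1, 0, by simp, by simp, Subsingleton.elim _ _⟩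
  let e := EuclideanSpace.basisFun (ι ⊕ κ) ℝ
  let V := Submodule.span ℝ (Set.range fun c => WithLp.toLp 2 (yᵀ c))
  have hE : Module.finrank ℝ (EuclideanSpace ℝ (ι ⊕ κ)) = Fintype.card (ι ⊕ κ) :=
    finrank_euclideanSpace
  have hV : Fintype.card ι ≤ Module.finrank ℝ Vᗮ := by
    have hVβ : Module.finrank ℝ V ≤ Fintype.card β := finrank_range_le_card _
    have := V.finrank_add_finrank_orthogonal
    rw [hE, Fintype.card_sum] at this
    omega
  obtain ⟨b, hbo, hbV⟩ :=
    exists_orthonormalBasis_orientation_eq_apply_inl_mem e.toBasis.orientation Vᗮ hV hE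
  let g := e.toBasis.toMatrix b
  have hg : gᵀ * g = 1 := by
    simpa [conjTranspose_eq_transpose_of_trivial] using
      e.toMatrix_orthonormalBasis_conjTranspose_mul_self b
  have hdet : g.det = 1 := by
    have hpos := (e.toBasis.orientation_eq_iff_det_pos b.toBasis).mp hbo.symm
    rw [OrthonormalBasis.coe_toBasis] at hpos
    rw [← e.toBasis.det_apply]
    rcases e.det_to_matrix_orthonormalBasis_real b with h | h
    · exact h
    · rw [h] at hpos
      norm_num at hpos
  have hzero : toRows₁ (gᵀ * y) = 0 := by
    ext i c
    have := (V.mem_orthogonal' _).mp (hbV i) _ (Submodule.subset_span ⟨c, rfl⟩)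
    simpa [mul_apply, g, e, Module.Basis.toMatrix_apply, EuclideanSpace.inner_eq_star_dotProduct,
      dotProduct, mul_comm] using this
  refine ⟨g, toRows₂ (gᵀ * y), hg, hdet, ?_⟩
  rw [← hzero, fromRows_toRows, ← Matrix.mul_assoc, mul_eq_one_comm.mp hg, Matrix.one_mul]

end Rotation

section Measure

variable {m n : Type*} [Fintype m] [Fintype n]

variable (m n) in
def vecMeasurableEquiv : Matrix m n ℝ ≃ᵐ (n × m → ℝ) where
  toFun := vec
  invFun v i j := v (j, i)
  left_inv _ := rfl
  right_inv _ := rfl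
  measurable_toFun := measurable_pi_lambda _ fun p =>
    (measurable_pi_apply p.1).comp (measurable_pi_apply p.2)
  measurable_invFun := measurable_pi_lambda _ fun i => measurable_pi_lambda _ fun j =>
    measurable_pi_apply (j, i)

@[simp]
theorem vecMeasurableEquiv_apply (x : Matrix m n ℝ) : vecMeasurableEquiv m n x = vec x := rfl

theorem measurePreserving_vecMeasurableEquiv :
    MeasurePreserving (vecMeasurableEquiv m n) volume volume := by
  refine ⟨(vecMeasurableEquiv m n).measurable, (Measure.pi_eq fun s _ => ?_).symm⟩
  have hpre : (fun (x : m → n → ℝ) (p : n × m) => x p.2 p.1) ⁻¹' Set.univ.pi s =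
      Set.univ.pi fun i => Set.univ.pi fun j => s (j, i) := by
    ext x
    simp [forall_comm (α := n)]
  rw [MeasurableEquiv.map_apply]
  change (Measure.pi fun _ => Measure.pi fun _ => volume) _ = _
  erw [hpre]
  simp_rw [Measure.pi_pi]
  rw [Fintype.prod_prod_type_right]

instance : BorelSpace (Matrix m n ℝ) := inferInstanceAs (BorelSpace (m → n → ℝ))

instance : SigmaFinite (volume : Measure (Matrix m n ℝ)) :=
  inferInstanceAs (SigmaFinite (volume : Measure (m → n → ℝ)))

instance isAddHaarMeasure_volume : (volume : Measure (Matrix m n ℝ)).IsAddHaarMeasure :=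
  Measure.pi.isAddHaarMeasure _

/- Schwartz maps live on the topology of the sup norm `Matrix.normedAddCommGroup`, which is not
syntactically the product topology of the instances above. -/
theorem integrable_schwartzMap {E : Type*} [NormedAddCommGroup E] [NormedSpace ℝ E]
    (f : SchwartzMap (Matrix m n ℝ) E) : Integrable f := by
  have : @BorelSpace (Matrix m n ℝ) PseudoMetricSpace.toUniformSpace.toTopologicalSpace _ :=
    inferInstanceAs (BorelSpace (m → n → ℝ))
  have : (volume : Measure (Matrix m n ℝ)).HasTemperateGrowth :=
    Measure.IsAddHaarMeasure.instHasTemperateGrowth (h := isAddHaarMeasure_volume)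
  exact f.integrable

variable [DecidableEq m] {g : Matrix m m ℝ}

/- Under `vec`, left multiplication by `g` is the matrix `1 ⊗ₖ g`, of determinant
`det g ^ card n`. -/
theorem measurePreserving_mul_left (hg : |g.det| = 1) :
    MeasurePreserving (fun x : Matrix m n ℝ => g * x) volume volume := by
  classical
  let M : Matrix (n × m) (n × m) ℝ := 1 ⊗ₖ g
  have hM : |M.det| = 1 := by
    rw [det_kronecker, det_one, one_pow, one_mul, abs_pow, hg, one_pow]
  have hlin : MeasurePreserving (toLin' M) volume volume :=
    ⟨(toLin' M).continuous_of_finiteDimensional.measurable, by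
      rw [Real.map_matrix_volume_pi_eq_smul_volume_pi (by simp [← abs_pos, hM]), abs_inv, hM,
        inv_one, ENNReal.ofReal_one, one_smul]⟩
  have hconj : (fun x : Matrix m n ℝ => g * x) =
      (vecMeasurableEquiv m n).symm ∘ toLin' M ∘ vecMeasurableEquiv m n := by
    funext x
    apply (vecMeasurableEquiv m n).injective
    simp [M, vec_mul_eq_mulVec]
  rw [hconj]
  exact measurePreserving_vecMeasurableEquiv.symm.comp
    (hlin.comp measurePreserving_vecMeasurableEquiv)

theorem measurableEmbedding_mul_left (hg : IsUnit g.det) :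
    MeasurableEmbedding (fun x : Matrix m n ℝ => g * x) :=
  MeasurableEquiv.measurableEmbedding (α := Matrix m n ℝ)
    { toFun x := g * x
      invFun x := g⁻¹ * x
      left_inv x := by
        dsimp only
        rw [← Matrix.mul_assoc, nonsing_inv_mul g hg, Matrix.one_mul]
      right_inv x := by
        dsimp only
        rw [← Matrix.mul_assoc, mul_nonsing_inv g hg, Matrix.one_mul]
      measurable_toFun := (continuous_const.matrix_mul continuous_id).measurable
      measurable_invFun := (continuous_const.matrix_mul continuous_id).measurable }

theorem integral_comp_mul_left {E : Type*} [NormedAddCommGroup E] [NormedSpace ℝ E]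
    (hg : |g.det| = 1) (G : Matrix m n ℝ → E) :
    ∫ x : Matrix m n ℝ, G (g * x) = ∫ x, G x :=
  (measurePreserving_mul_left hg).integral_comp
    (measurableEmbedding_mul_left (abs_pos.mp (hg ▸ one_pos)).isUnit) G

theorem integrable_comp_mul_left_iff {E : Type*} [NormedAddCommGroup E] (hg : |g.det| = 1)
    {G : Matrix m n ℝ → E} :
    Integrable (fun x : Matrix m n ℝ => G (g * x)) ↔ Integrable G :=
  (measurePreserving_mul_left hg).integrable_comp_emb
    (measurableEmbedding_mul_left (abs_pos.mp (hg ▸ one_pos)).isUnit)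

end Measure

section Fourier

variable {m n : Type*} [Fintype m] [Fintype n]

variable (m n) in
noncomputable def euclideanMeasurableEquiv : Matrix m n ℝ ≃ᵐ EuclideanSpace ℝ (n × m) :=
  (vecMeasurableEquiv m n).trans (MeasurableEquiv.toLp 2 _)

theorem measurePreserving_euclideanMeasurableEquiv :
    MeasurePreserving (euclideanMeasurableEquiv m n) volume volume :=
  (EuclideanSpace.volume_preserving_symm_measurableEquiv_toLp _).symm.comp
    measurePreserving_vecMeasurableEquiv

theorem continuous_euclideanMeasurableEquiv_symm :
    Continuous (euclideanMeasurableEquiv m n).symm := by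
  change Continuous fun (v : EuclideanSpace ℝ (n × m)) (i : m) (j : n) => v (j, i)
  fun_prop

theorem inner_euclideanMeasurableEquiv (x y : Matrix m n ℝ) :
    ⟪euclideanMeasurableEquiv m n x, euclideanMeasurableEquiv m n y⟫ = (xᵀ * y).trace := by
  rw [EuclideanSpace.inner_eq_star_dotProduct]
  simp [euclideanMeasurableEquiv, vec_dotProduct_vec, ← trace_transpose (yᵀ * x)]

variable {E : Type*} [NormedAddCommGroup E] [NormedSpace ℂ E]

noncomputable def fourierIntegral (G : Matrix m n ℝ → E) (y : Matrix m n ℝ) : E :=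
  ∫ x, 𝐞 (-(xᵀ * y).trace) • G x

theorem integrable_fourierChar_smul {G : Matrix m n ℝ → E} (hG : Integrable G)
    (y : Matrix m n ℝ) : Integrable fun x => 𝐞 (-(xᵀ * y).trace) • G x :=
  hG.mono ((by fun_prop : Continuous fun x : Matrix m n ℝ => 𝐞 (-(xᵀ * y).trace))
    |>.aestronglyMeasurable.smul hG.1) (ae_of_all _ fun x => by rw [Circle.norm_smul])

theorem fourier_comp_euclideanMeasurableEquiv_symm (G : Matrix m n ℝ → E) (y : Matrix m n ℝ) :
    𝓕 (G ∘ (euclideanMeasurableEquiv m n).symm) (euclideanMeasurableEquiv m n y) =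
      fourierIntegral G y := by
  rw [Real.fourier_eq, ← measurePreserving_euclideanMeasurableEquiv.integral_comp']
  simp [inner_euclideanMeasurableEquiv, fourierIntegral]

theorem eq_zero_of_fourierIntegral_eq_zero [CompleteSpace E] {G : Matrix m n ℝ → E}
    (hc : Continuous G) (hi : Integrable G) (h : ∀ y, fourierIntegral G y = 0) : G = 0 := by
  let ψ := euclideanMeasurableEquiv m n
  have hF : 𝓕 (G ∘ ψ.symm) = 0 := funext fun w => by
    simpa using fourier_comp_euclideanMeasurableEquiv_symm G (ψ.symm w) ▸ h (ψ.symm w)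
  have hinv := (hc.comp continuous_euclideanMeasurableEquiv_symm).fourierInv_fourier_eq
    ((measurePreserving_euclideanMeasurableEquiv.symm.integrable_comp_emb
      ψ.symm.measurableEmbedding).mpr hi) (hF ▸ integrable_zero _ _ _)
  rw [hF] at hinv
  funext x
  simpa [ψ, Real.fourierInv_eq] using (congrFun hinv (ψ x)).symm

theorem fourierIntegral_mul_left [DecidableEq m] {g : Matrix m m ℝ} (hg : gᵀ * g = 1)
    (G : Matrix m n ℝ → E) (y : Matrix m n ℝ) :
    fourierIntegral G (g * y) = fourierIntegral (fun x => G (g * x)) y := by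
  have habs : |g.det| = 1 := by
    have : g.det * g.det = 1 := by simpa using congrArg det hg
    rcases mul_self_eq_one_iff.mp this with h | h <;> simp [h]
  have hpair (x : Matrix m n ℝ) : (g * x)ᵀ * (g * y) = xᵀ * y := by
    rw [transpose_mul, Matrix.mul_assoc, ← Matrix.mul_assoc gᵀ, hg, Matrix.one_mul]
  rw [fourierIntegral, ← integral_comp_mul_left habs]
  simp only [hpair, fourierIntegral]

theorem fourierIntegral_fromRows_zero {ι κ : Type*} [Fintype ι] [Fintype κ]
    {G : Matrix (ι ⊕ κ) n ℝ → E} (hG : Integrable G) (s : Matrix κ n ℝ) :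
    fourierIntegral G (fromRows 0 s) = ∫ t, 𝐞 (-(tᵀ * s).trace) • ∫ u, G (fromRows u t) := by
  let Φ : Matrix ι n ℝ × Matrix κ n ℝ ≃ᵐ Matrix (ι ⊕ κ) n ℝ :=
    (MeasurableEquiv.sumPiEquivProdPi fun _ => n → ℝ).symm
  have hΦ : MeasurePreserving Φ volume volume :=
    volume_measurePreserving_sumPiEquivProdPi_symm _
  have hΦ_apply (p) : Φ p = fromRows p.1 p.2 := by ext (i | i) j <;> rfl
  have htrace (u : Matrix ι n ℝ) (t : Matrix κ n ℝ) :
      ((fromRows u t)ᵀ * (fromRows 0 s : Matrix (ι ⊕ κ) n ℝ)).trace = (tᵀ * s).trace := by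
    simp [transpose_fromRows, fromCols_mul_fromRows]
  have hint := (hΦ.integrable_comp_emb Φ.measurableEmbedding).mpr
    (integrable_fourierChar_smul hG (fromRows 0 s))
  simp only [Function.comp_def, hΦ_apply, htrace, Measure.volume_eq_prod] at hint
  rw [fourierIntegral, ← hΦ.integral_comp']
  simp only [hΦ_apply, htrace]
  rw [Measure.volume_eq_prod, integral_prod_symm _ hint]
  simp only [Circle.smul_def, integral_smul]

end Fourier

end Matrix

theorem radon_injective_general (k l m : ℕ) (hlm : m ≤ l)
    (f : SchwartzMap (Matrix (Fin k ⊕ Fin l) (Fin m) ℝ) ℂ)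
    (h : ∀ (ξ : Matrix (Fin k ⊕ Fin l) (Fin l) ℝ), ξᵀ * ξ = 1 →
      ∀ (g : Matrix (Fin k ⊕ Fin l) (Fin k ⊕ Fin l) ℝ),
        gᵀ * g = 1 → g.det = 1 → g * xi0 k l = ξ →
      ∀ t : Matrix (Fin l) (Fin m) ℝ,
        (∫ u : Matrix (Fin k) (Fin m) ℝ, f (g * Matrix.fromRows u t)) = 0) :
    f = 0 := by
  have hxi : (xi0 k l)ᵀ * xi0 k l = 1 := by
    simp [xi0, transpose_fromRows, fromCols_mul_fromRows]
  have hf : ⇑f = 0 := by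
    refine eq_zero_of_fourierIntegral_eq_zero f.continuous (integrable_schwartzMap f) fun y => ?_
    obtain ⟨g, s, hg, hdet, rfl⟩ := exists_mul_fromRows_zero (by simpa using hlm) y
    have hξ : (g * xi0 k l)ᵀ * (g * xi0 k l) = 1 := by
      rw [transpose_mul, Matrix.mul_assoc, ← Matrix.mul_assoc gᵀ, hg, Matrix.one_mul, hxi]
    have hradon (t : Matrix (Fin l) (Fin m) ℝ) :
        ∫ u, f (g * (fromRows u t : Matrix (Fin k ⊕ Fin l) (Fin m) ℝ)) = 0 :=
      h _ hξ g hg hdet rfl t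
    have hfg : Integrable fun x : Matrix (Fin k ⊕ Fin l) (Fin m) ℝ => f (g * x) :=
      (Matrix.integrable_comp_mul_left_iff (by simp [hdet])).mpr (integrable_schwartzMap f)
    rw [fourierIntegral_mul_left hg, fourierIntegral_fromRows_zero hfg]
    simp [hradon]
  ext x
  exact congrFun hf x

/-- if `n - k ≥ m` (`n = k + l`, `m ≤ l`), the matrix `k`-plane Radon
transform is injective on the Schwartz space: if `f̂(ξ,t) = 0` for all frames
`ξ ∈ V_{n,n-k}` and all `t ∈ M_{n-k,m}` then `f = 0`. -/
theorem radon_injective (k l m : ℕ) (hk : 0 < k) (hl : 0 < l) (hlm : m ≤ l)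
    (f : SchwartzMap (Matrix (Fin k ⊕ Fin l) (Fin m) ℝ) ℂ)
    (h : ∀ (ξ : Matrix (Fin k ⊕ Fin l) (Fin l) ℝ), ξᵀ * ξ = 1 →
      ∀ (g : Matrix (Fin k ⊕ Fin l) (Fin k ⊕ Fin l) ℝ),
        gᵀ * g = 1 → g.det = 1 → g * xi0 k l = ξ →
      ∀ t : Matrix (Fin l) (Fin m) ℝ,
        (∫ u : Matrix (Fin k) (Fin m) ℝ, f (g * Matrix.fromRows u t)) = 0) :
    f = 0 :=
  radon_injective_general k l m hlm f h
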